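/- Fix an integer c ≥ 4. Then, as n → ∞, the average effective resistance of the two-dimensional toroidal grid with one side fixed equal to c satisfies R_ave(T_{c,n}) ~ n/(12c²)·c, i.e. lim_{n→∞} R_ave(T_{c,n}) / n = 1/(12c); in particular, with total size N = c·n, R_ave(T_{c,N/c}) ~ N/(12c²). -/

import Mathlib

/-!
Row `i = 0` of the double sum is the cycle sum `∑_{0<j<n} 1/(2 - 2cos(2πj/n)) = (n² - 1)/12`.
With `ω = e^{2πij/n}` one has `1/(2 - 2cos(2πj/n)) = -ω/(ω - 1)²`, and
`(ω - 1)² ∑_v v(n - v) ω^v = 2nω` for every nontrivial `n`-th root of unity `ω`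
(`v ↦ v(n - v)` is the Green's function of the cycle); summing over `j` and using orthogonality
of characters leaves `-∑_v v(n - v) / 2n = -(n² - 1)/12`. Each of the other `c - 1` rows has
terms bounded by `1/(2 - 2cos(2πi/c))`, so contributes `O(n)`. Dividing by `c n²` gives the
limit `1/(12c)`.
-/

open Real Finset

/-- Average effective resistance of the two-dimensional toroidal grid `T_{M1,M2}`. -/
noncomputable def Rave2 (M1 M2 : ℕ) : ℝ :=
  (1 / ((M1 : ℝ) * M2)) * ∑ i ∈ Finset.range M1, ∑ j ∈ Finset.range M2,
    if i = 0 ∧ j = 0 then 0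
    else 1 / (4 - 2 * Real.cos (2 * Real.pi * i / M1) - 2 * Real.cos (2 * Real.pi * j / M2))

open Filter Topology

section GeomSums

variable {R : Type*} [CommRing R]

theorem sub_one_sq_mul_sum_range_mul_pow (x : R) (n : ℕ) :
    (x - 1) ^ 2 * ∑ v ∈ range n, (v : R) * x ^ v
      = (n - 1) * x ^ (n + 1) - n * x ^ n + x := by
  induction n with
  | zero => simp
  | succ n ih =>
    rw [sum_range_succ, mul_add]
    push_cast
    linear_combination ih

theorem sub_one_cube_mul_sum_range_sq_mul_pow (x : R) (n : ℕ) :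
    (x - 1) ^ 3 * ∑ v ∈ range n, (v : R) ^ 2 * x ^ v
      = (n - 1) ^ 2 * x ^ (n + 2) - (2 * n ^ 2 - 2 * n - 1) * x ^ (n + 1) + n ^ 2 * x ^ n
        - x ^ 2 - x := by
  induction n with
  | zero => simp
  | succ n ih =>
    rw [sum_range_succ, mul_add]
    push_cast
    linear_combination ih

theorem six_mul_sum_range_mul_sub (n : ℕ) :
    6 * ∑ v ∈ range n, (v : R) * (n - v) = n * (n ^ 2 - 1) := by
  have h1 : ∀ m : ℕ, 2 * ∑ v ∈ range m, (v : R) = m * (m - 1) := by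
    intro m
    induction m with
    | zero => simp
    | succ m ih => rw [sum_range_succ, mul_add, ih]; push_cast; ring
  have h2 : ∀ m : ℕ, 6 * ∑ v ∈ range m, (v : R) ^ 2 = m * (m - 1) * (2 * m - 1) := by
    intro m
    induction m with
    | zero => simp
    | succ m ih => rw [sum_range_succ, mul_add, ih]; push_cast; ring
  have hsplit : ∑ v ∈ range n, (v : R) * (n - v)
      = n * ∑ v ∈ range n, (v : R) - ∑ v ∈ range n, (v : R) ^ 2 := by
    rw [mul_sum, ← sum_sub_distrib]
    exact sum_congr rfl fun v _ => by ring
  rw [hsplit]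
  linear_combination 3 * (n : R) * h1 n - h2 n

theorem sub_one_sq_mul_sum_range_mul_sub_mul_pow [IsDomain R] {x : R} {n : ℕ} (hxn : x ^ n = 1)
    (hx : x ≠ 1) :
    (x - 1) ^ 2 * ∑ v ∈ range n, (v : R) * (n - v) * x ^ v = 2 * n * x := by
  have h1 := sub_one_sq_mul_sum_range_mul_pow x n
  have h2 := sub_one_cube_mul_sum_range_sq_mul_pow x n
  have hx1 : x ^ (n + 1) = x := by rw [pow_succ, hxn, one_mul]
  have hx2 : x ^ (n + 2) = x ^ 2 := by rw [pow_add, hxn, one_mul]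
  rw [hx1, hxn] at h1
  rw [hx2, hx1, hxn] at h2
  have hsplit : ∑ v ∈ range n, (v : R) * (n - v) * x ^ v
      = n * ∑ v ∈ range n, (v : R) * x ^ v - ∑ v ∈ range n, (v : R) ^ 2 * x ^ v := by
    rw [mul_sum, ← sum_sub_distrib]
    exact sum_congr rfl fun v _ => by ring
  refine mul_left_cancel₀ (sub_ne_zero.mpr hx) ?_
  rw [hsplit]
  linear_combination (n : R) * (x - 1) * h1 - h2

end GeomSums

section RootsOfUnity

variable {K : Type*} [Field K]

theorem sum_Ico_pow_eq_neg_one {x : K} {n : ℕ} (hxn : x ^ n = 1) (hx : x ≠ 1) (hn : 0 < n) :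
    ∑ j ∈ Ico 1 n, x ^ j = -1 := by
  have h := geom_sum_eq hx n
  rw [hxn, sub_self, zero_div, sum_range_eq_add_Ico _ hn, pow_zero] at h
  linear_combination h

theorem IsPrimitiveRoot.sum_Ico_pow_div_pow_sub_one_sq [CharZero K] {ζ : K} {n : ℕ}
    (hζ : IsPrimitiveRoot ζ n) (hn : n ≠ 0) :
    ∑ j ∈ Ico 1 n, ζ ^ j / (ζ ^ j - 1) ^ 2 = -((n : K) ^ 2 - 1) / 12 := by
  have hn0 : (n : K) ≠ 0 := Nat.cast_ne_zero.mpr hn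
  have hpow_ne_one : ∀ j ∈ Ico 1 n, ζ ^ j ≠ 1 := fun j hj =>
    hζ.pow_ne_one_of_pos_of_lt (by simp at hj; omega) (mem_Ico.mp hj).2
  have hpow_pow : ∀ j, (ζ ^ j) ^ n = 1 := fun j => by
    rw [← pow_right_comm, hζ.pow_eq_one, one_pow]
  have hterm : ∀ j ∈ Ico 1 n, ζ ^ j / (ζ ^ j - 1) ^ 2
      = (2 * (n : K))⁻¹ * ∑ v ∈ range n, (v : K) * (n - v) * (ζ ^ j) ^ v := by
    intro j hj
    have hkey := sub_one_sq_mul_sum_range_mul_sub_mul_pow (hpow_pow j) (hpow_ne_one j hj)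
    have hsq : (ζ ^ j - 1) ^ 2 ≠ 0 := pow_ne_zero _ (sub_ne_zero.mpr (hpow_ne_one j hj))
    rw [eq_inv_mul_iff_mul_eq₀ (mul_ne_zero two_ne_zero hn0), ← mul_div_assoc, div_eq_iff hsq,
      ← hkey, mul_comm]
  rw [sum_congr rfl hterm, ← mul_sum, sum_comm]
  have hinner : ∀ v ∈ range n,
      ∑ j ∈ Ico 1 n, (v : K) * (n - v) * (ζ ^ j) ^ v = -((v : K) * (n - v)) := by
    intro v hv
    rcases Nat.eq_zero_or_pos v with rfl | hv0
    · simp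
    simp_rw [← pow_mul, mul_comm _ v, pow_mul, ← mul_sum]
    rw [sum_Ico_pow_eq_neg_one (hpow_pow v) (hζ.pow_ne_one_of_pos_of_lt hv0.ne' (mem_range.mp hv))
      (Nat.pos_of_ne_zero hn)]
    ring
  rw [sum_congr rfl hinner, sum_neg_distrib]
  have h6 := six_mul_sum_range_mul_sub (R := K) n
  field_simp
  linear_combination -2 * h6

end RootsOfUnity

theorem Complex.exp_mul_I_sub_one_sq (θ : ℝ) :
    (Complex.exp (θ * Complex.I) - 1) ^ 2
      = -Complex.exp (θ * Complex.I) * (2 - 2 * Real.cos θ) := by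
  have hinv : Complex.exp (θ * Complex.I) * Complex.exp (-θ * Complex.I) = 1 := by
    rw [← Complex.exp_add, neg_mul, add_neg_cancel, Complex.exp_zero]
  push_cast
  linear_combination -Complex.exp (θ * Complex.I) * Complex.two_cos (θ : ℂ) - hinv

theorem Complex.ofReal_inv_two_sub_two_cos (θ : ℝ) :
    (((2 - 2 * Real.cos θ)⁻¹ : ℝ) : ℂ)
      = -(Complex.exp (θ * Complex.I) / (Complex.exp (θ * Complex.I) - 1) ^ 2) := by
  rw [Complex.exp_mul_I_sub_one_sq, neg_mul, div_neg, neg_neg,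
    div_mul_cancel_left₀ (Complex.exp_ne_zero _)]
  norm_cast

theorem sum_Ico_inv_two_sub_two_cos {n : ℕ} (hn : n ≠ 0) :
    ∑ j ∈ Ico 1 n, (2 - 2 * Real.cos (2 * π * j / n))⁻¹ = ((n : ℝ) ^ 2 - 1) / 12 := by
  set ζ := Complex.exp (2 * π * Complex.I / n)
  have hζ_pow (j : ℕ) : ζ ^ j = Complex.exp (↑(2 * π * j / n) * Complex.I) := by
    rw [← Complex.exp_nat_mul]
    push_cast
    ring_nf
  apply Complex.ofReal_injective
  push_cast only [Complex.ofReal_sum]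
  simp_rw [Complex.ofReal_inv_two_sub_two_cos, ← hζ_pow]
  rw [sum_neg_distrib, (Complex.isPrimitiveRoot_exp n hn).sum_Ico_pow_div_pow_sub_one_sq hn]
  push_cast
  ring

theorem cos_two_pi_mul_div_lt_one {i m : ℕ} (hi : 0 < i) (him : i < m) :
    Real.cos (2 * π * i / m) < 1 := by
  have hm : (0 : ℝ) < m := by exact_mod_cast hi.trans him
  have hpos : 0 < 2 * π * i / m := by positivity
  have hlt : 2 * π * i / m < 2 * π := by
    rw [div_lt_iff₀ hm]
    gcongr
  refine (Real.cos_le_one _).lt_of_ne fun h => hpos.ne' ?_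
  exact (Real.cos_eq_one_iff_of_lt_of_lt (by linarith [Real.pi_pos]) hlt).mp h

noncomputable def torusRowSum (M1 M2 i : ℕ) : ℝ :=
  ∑ j ∈ range M2, if i = 0 ∧ j = 0 then 0
    else 1 / (4 - 2 * Real.cos (2 * π * i / M1) - 2 * Real.cos (2 * π * j / M2))

theorem Rave2_div_natCast_eq (M1 M2 : ℕ) :
    Rave2 M1 M2 / M2
      = (M1 : ℝ)⁻¹ * ∑ i ∈ range M1, torusRowSum M1 M2 i / (M2 : ℝ) ^ 2 := by
  rw [Rave2, ← sum_div]
  simp only [torusRowSum]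
  ring

theorem torusRowSum_zero (M1 : ℕ) {n : ℕ} (hn : n ≠ 0) :
    torusRowSum M1 n 0 = ((n : ℝ) ^ 2 - 1) / 12 := by
  rw [torusRowSum, sum_range_eq_add_Ico _ (Nat.pos_of_ne_zero hn),
    ← sum_Ico_inv_two_sub_two_cos hn]
  refine (zero_add _).trans (sum_congr rfl fun j hj => ?_)
  rw [if_neg (by simp at hj; omega)]
  norm_num

theorem torusRowSum_nonneg (M1 M2 i : ℕ) : 0 ≤ torusRowSum M1 M2 i := by
  refine sum_nonneg fun j _ => ?_
  split_ifs
  · exact le_rfl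
  · have := Real.cos_le_one (2 * π * i / M1)
    have := Real.cos_le_one (2 * π * j / M2)
    exact one_div_nonneg.mpr (by linarith)

theorem torusRowSum_le {M1 i : ℕ} (hD : 0 < 2 - 2 * Real.cos (2 * π * i / M1)) (n : ℕ) :
    torusRowSum M1 n i ≤ n / (2 - 2 * Real.cos (2 * π * i / M1)) := by
  calc torusRowSum M1 n i ≤ ∑ _j ∈ range n, 1 / (2 - 2 * Real.cos (2 * π * i / M1)) := by
        refine sum_le_sum fun j _ => ?_
        split_ifs
        · positivity
        · exact one_div_le_one_div_of_le hD (by linarith [Real.cos_le_one (2 * π * j / n)])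
    _ = n / (2 - 2 * Real.cos (2 * π * i / M1)) := by
        rw [sum_const, card_range, nsmul_eq_mul, mul_one_div]

theorem tendsto_torusRowSum_zero_div_sq (M1 : ℕ) :
    Tendsto (fun n : ℕ => torusRowSum M1 n 0 / (n : ℝ) ^ 2) atTop (𝓝 (1 / 12)) := by
  have h := (tendsto_inv_atTop_nhds_zero_nat (𝕜 := ℝ)).pow 2
    |>.const_mul (1 / 12) |>.const_sub (1 / 12)
  rw [zero_pow two_ne_zero, mul_zero, sub_zero] at h
  refine h.congr' ?_
  filter_upwards [eventually_ne_atTop 0] with n hn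
  rw [torusRowSum_zero M1 hn]
  field_simp

theorem tendsto_torusRowSum_div_sq {M1 i : ℕ} (hi : 0 < i) (hiM : i < M1) :
    Tendsto (fun n : ℕ => torusRowSum M1 n i / (n : ℝ) ^ 2) atTop (𝓝 0) := by
  set D := 2 - 2 * Real.cos (2 * π * i / M1)
  have hD : 0 < D := by linarith [cos_two_pi_mul_div_lt_one hi hiM]
  have h := (tendsto_inv_atTop_nhds_zero_nat (𝕜 := ℝ)).const_mul D⁻¹
  rw [mul_zero] at h
  refine squeeze_zero' (.of_forall fun n => by have := torusRowSum_nonneg M1 n i; positivity) ?_ h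
  filter_upwards [eventually_ne_atTop 0] with n hn
  calc torusRowSum M1 n i / (n : ℝ) ^ 2 ≤ n / D / (n : ℝ) ^ 2 := by
        gcongr
        exact torusRowSum_le hD n
    _ = D⁻¹ * (n : ℝ)⁻¹ := by field_simp

theorem torus2_thin_asymptotic (c : ℕ) (hc : 4 ≤ c) :
    Filter.Tendsto (fun n : ℕ => Rave2 c n / (n : ℝ)) Filter.atTop
      (nhds (1 / (12 * (c : ℝ)))) := by
  have hc0 : 0 < c := by omega
  have hrows : Tendsto (fun n : ℕ => ∑ i ∈ range c, torusRowSum c n i / (n : ℝ) ^ 2) atTop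
      (𝓝 (∑ i ∈ range c, if i = 0 then 1 / 12 else 0)) := by
    refine tendsto_finsetSum _ fun i hi => ?_
    rcases Nat.eq_zero_or_pos i with rfl | hi0
    · simpa using tendsto_torusRowSum_zero_div_sq c
    · simpa [hi0.ne'] using tendsto_torusRowSum_div_sq hi0 (mem_range.mp hi)
  rw [sum_ite_eq', if_pos (mem_range.mpr hc0)] at hrows
  simp_rw [Rave2_div_natCast_eq]
  convert hrows.const_mul (c : ℝ)⁻¹ using 2
  field_simp
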